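/- Let H be a real Hilbert space, D ⊆ H nonempty closed and convex, and T : H → H nonexpansive on D. Let (x_n) be a sequence in D and p ∈ D. If (x_n) converges weakly to p and (x_n − T x_n) converges strongly to 0, then p is a fixed point of T. -/

import Mathlib

/-!
Write `q = T p`. Nonexpansiveness gives `‖x n - q‖ ≤ ‖x n - T (x n)‖ + ‖x n - p‖`, while
`‖x n - q‖² = ‖x n - p‖² + 2⟪p - q, x n - p⟫ + ‖p - q‖²`. Weak convergence makes the inner product
vanish in the limit and keeps `‖x n - p‖` bounded, so `‖p - q‖² ≤ 0`.
-/

open Filter Topology TopologicalSpace Function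

variable {H : Type*} [NormedAddCommGroup H] [InnerProductSpace ℝ H]

def WeakConverge (x : ℕ → H) (p : H) : Prop :=
  Tendsto ((toWeakSpace ℝ H) ∘ x) atTop (nhds ((toWeakSpace ℝ H) p))

def FixSet (T : H → H) : Set H := {x | Function.IsFixedPt T x}

def QuasiNonexpansiveOn (T : H → H) (s : Set H) : Prop :=
  ∀ ⦃x⦄, x ∈ s → ∀ ⦃y⦄, y ∈ FixSet T ∩ s → ‖T x - y‖ ≤ ‖x - y‖

def NonexpansiveOn (T : H → H) (s : Set H) : Prop := LipschitzOnWith 1 T s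

open scoped InnerProductSpace

theorem tendsto_apply_of_tendsto_toWeakSpace {𝕜 E α : Type*} [NontriviallyNormedField 𝕜]
    [SeminormedAddCommGroup E] [NormedSpace 𝕜 E] {l : Filter α} {x : α → E} {p : E}
    (hx : Tendsto (toWeakSpace 𝕜 E ∘ x) l (𝓝 (toWeakSpace 𝕜 E p))) (f : StrongDual 𝕜 E) :
    Tendsto (fun n => f (x n)) l (𝓝 (f p)) :=
  ((WeakBilin.eval_continuous _ f).tendsto _).comp hx

/-- Uniform boundedness in the dual, which is complete even when `E` is not, then the isometric
embedding into the bidual. -/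
theorem exists_norm_le_of_tendsto_toWeakSpace {𝕜 E : Type*} [RCLike 𝕜] [SeminormedAddCommGroup E]
    [NormedSpace 𝕜 E] {x : ℕ → E} {p : E}
    (hx : Tendsto (toWeakSpace 𝕜 E ∘ x) atTop (𝓝 (toWeakSpace 𝕜 E p))) :
    ∃ C, ∀ n, ‖x n‖ ≤ C := by
  obtain ⟨C, hC⟩ := banach_steinhaus (g := fun n => NormedSpace.inclusionInDoubleDual 𝕜 E (x n))
    fun f => by
      obtain ⟨C, hC⟩ := (tendsto_apply_of_tendsto_toWeakSpace hx f).norm.bddAbove_range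
      exact ⟨C, fun n => hC (Set.mem_range_self n)⟩
  exact ⟨C, fun n => (NormedSpace.inclusionInDoubleDualLi 𝕜).norm_map (x n) ▸ hC n⟩

namespace WeakConverge

variable {x : ℕ → H} {p q : H}

theorem tendsto_inner (hw : WeakConverge x p) (y : H) :
    Tendsto (fun n => ⟪y, x n⟫_ℝ) atTop (𝓝 ⟪y, p⟫_ℝ) :=
  tendsto_apply_of_tendsto_toWeakSpace hw (innerSL ℝ y)

theorem eq_of_norm_sub_le {δ : ℕ → ℝ} (hw : WeakConverge x p) (hδ : Tendsto δ atTop (𝓝 0))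
    (hle : ∀ n, ‖x n - q‖ ≤ δ n + ‖x n - p‖) : q = p := by
  obtain ⟨C, hC⟩ := exists_norm_le_of_tendsto_toWeakSpace hw
  have hinner : Tendsto (fun n => ⟪p - q, x n - p⟫_ℝ) atTop (𝓝 0) := by
    simpa only [inner_sub_right, sub_self] using (hw.tendsto_inner (p - q)).sub_const ⟪p - q, p⟫_ℝ
  have hbound : ∀ n, ‖p - q‖ ^ 2 ≤ 2 * (δ n * ‖x n - p‖) + δ n ^ 2 - 2 * ⟪p - q, x n - p⟫_ℝ := by
    intro n
    have hsq : ‖x n - q‖ ^ 2 = ‖x n - p‖ ^ 2 + 2 * ⟪p - q, x n - p⟫_ℝ + ‖p - q‖ ^ 2 := by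
      rw [← sub_add_sub_cancel (x n) p q, norm_add_sq_real, real_inner_comm]
    have := pow_le_pow_left₀ (norm_nonneg _) (hle n) 2
    nlinarith
  have hδx : Tendsto (fun n => δ n * ‖x n - p‖) atTop (𝓝 0) :=
    hδ.zero_mul_isBoundedUnder_le <| isBoundedUnder_of ⟨C + ‖p‖, fun n => by
      simpa using (norm_sub_le _ _).trans (add_le_add_left (hC n) _)⟩
  have hlim := ((hδx.const_mul 2).add (hδ.pow 2)).sub (hinner.const_mul 2)
  rw [mul_zero, zero_pow two_ne_zero, add_zero, sub_zero] at hlim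
  have hpq : ‖p - q‖ ^ 2 ≤ 0 := ge_of_tendsto' hlim hbound
  simpa [sub_eq_zero, eq_comm] using hpq

end WeakConverge

theorem NonexpansiveOn.norm_sub_le {E : Type*} [NormedAddCommGroup E] {T : E → E} {s : Set E}
    (hT : NonexpansiveOn T s) {x y : E} (hx : x ∈ s) (hy : y ∈ s) : ‖T x - T y‖ ≤ ‖x - y‖ := by
  simpa [dist_eq_norm] using hT.dist_le_mul x hx y hy

theorem weakLimit_mem_fixedPoints_of_strongly_tendsto_sub_general
    {D : Set H}
    {T : H → H} (hT_nonexp : NonexpansiveOn T D)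
    (x : ℕ → H) (hx : ∀ n, x n ∈ D) (p : H) (hp : p ∈ D)
    (hw : WeakConverge x p)
    (he : Tendsto (fun n => x n - T (x n)) atTop (nhds 0)) : p ∈ FixSet T := by
  refine hw.eq_of_norm_sub_le (δ := fun n => ‖x n - T (x n)‖) (by simpa using he.norm) fun n => ?_
  calc ‖x n - T p‖ ≤ ‖x n - T (x n)‖ + ‖T (x n) - T p‖ := norm_sub_le_norm_sub_add_norm_sub _ _ _
    _ ≤ ‖x n - T (x n)‖ + ‖x n - p‖ := add_le_add_right (hT_nonexp.norm_sub_le (hx n) hp) _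

theorem weakLimit_mem_fixedPoints_of_strongly_tendsto_sub [CompleteSpace H]
    {D : Set H} (hD_closed : IsClosed D) (hDc : Convex ℝ D) (hDn : D.Nonempty)
    {T : H → H} (hT_nonexp : NonexpansiveOn T D)
    (x : ℕ → H) (hx : ∀ n, x n ∈ D) (p : H) (hp : p ∈ D)
    (hw : WeakConverge x p)
    (he : Tendsto (fun n => x n - T (x n)) atTop (nhds 0)) : p ∈ FixSet T :=
  weakLimit_mem_fixedPoints_of_strongly_tendsto_sub_general hT_nonexp x hx p hp hw he
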